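/- Let C and D be further finite sets and ν : C ∪ D → G a map such that both ν(C) and ν(D) generate G, with M(C,D), 𝒞, 𝒟, N(C,D), ρ_{C,D} defined analogously. Choose elements s(a,c) ∈ ℤ[G] (a ∈ A, c ∈ C) with Σ_{a∈A} (e − μ(a)) s(a,c) = e − ν(c) for all c ∈ C, and t(b,d) ∈ ℤ[G] (b ∈ B, d ∈ D) with Σ_{b∈B} (e − μ(b)) t(b,d) = e − ν(d) for all d ∈ D. Define the homomorphism π : M_ℚ(A,B) → M_ℚ(C,D) by π(r ⊗ a ⊗ b) = Σ_{c∈C} Σ_{d∈D} r·s(a,c)·t(b,d) ⊗ c ⊗ d for r ∈ ℚ[G]. Then π maps M(A,B) into M(C,D) and 𝒜 + ℬ into 𝒞 + 𝒟, so it induces a homomorphism π̃ : N(A,B) → N(C,D) with π̃∘ρ_{A,B} = ρ_{C,D}∘π on M(A,B); and π̃ restricts to an isomorphism from the torsion subgroup T(N(A,B)) onto the torsion subgroup T(N(C,D)). -/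

import Mathlib

open MonoidAlgebra

/-- The integral group ring ℤ[G]. -/
noncomputable abbrev ZG (G : Type) [CommGroup G] := MonoidAlgebra ℤ G

variable (G : Type) [CommGroup G] (A B : Type)

/-- The subgroup 𝒜 of M(A,B) = ℤ[G] ⊗ ℤ^A ⊗ ℤ^B (identified with A → B → ℤ[G]),
consisting of the elements Σ α(a)(e − μ(b)) ⊗ a ⊗ b with α : A → ℤ[G]. -/
noncomputable def calA (μ : A ⊕ B → G) : AddSubgroup (A → B → ZG G) where
  carrier := {r | ∃ α : A → ZG G, ∀ a b, r a b = α a * (1 - MonoidAlgebra.of ℤ G (μ (Sum.inr b)))}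
  add_mem' := by
    rintro r r' ⟨α, hα⟩ ⟨α', hα'⟩
    exact ⟨α + α', fun a b => by simp [hα, hα', add_mul]⟩
  zero_mem' := ⟨0, fun a b => by simp⟩
  neg_mem' := by
    rintro r ⟨α, hα⟩
    exact ⟨-α, fun a b => by simp [hα, neg_mul]⟩

/-- The subgroup ℬ of M(A,B), consisting of the elements Σ β(b)(e − μ(a)) ⊗ a ⊗ b
with β : B → ℤ[G]. -/
noncomputable def calB (μ : A ⊕ B → G) : AddSubgroup (A → B → ZG G) where
  carrier := {r | ∃ β : B → ZG G, ∀ a b, r a b = β b * (1 - MonoidAlgebra.of ℤ G (μ (Sum.inl a)))}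
  add_mem' := by
    rintro r r' ⟨β, hβ⟩ ⟨β', hβ'⟩
    exact ⟨β + β', fun a b => by simp [hβ, hβ', add_mul]⟩
  zero_mem' := ⟨0, fun a b => by simp⟩
  neg_mem' := by
    rintro r ⟨β, hβ⟩
    exact ⟨-β, fun a b => by simp [hβ, neg_mul]⟩

/-!
Write an element of `M(A,B)` as an `A × B` matrix `r` and let `x = (e − μ(a))_a`,
`y = (e − μ(b))_b`. Then `𝒜 + ℬ` consists of the matrices `α yᵀ + x βᵀ`, the hypotheses on `s`
and `t` read `xᵀ s = (e − ν(c))_c` and `yᵀ t = (e − ν(d))_d`, and `π(r) = sᵀ r t`, which makes the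
first claim a matrix identity. Since `ν(C)` and `ν(D)` generate `G`, the same kind of data
`s'`, `t'` exists in the opposite direction, and `π' ∘ π` is `r ↦ Sᵀ r T` with `xᵀ S = xᵀ`,
`yᵀ T = yᵀ`. If `k r = α yᵀ + x βᵀ`, then `k (Sᵀ r − r) = (Sᵀ α − α) yᵀ`, and a `k`-divisible
multiple of the row `yᵀ` is `k` times a multiple of `yᵀ`: when `X (e − g)` is divisible by `k`
for all `g` (which follows from `μ(B)` generating `G`), the coefficients of `X` are all congruent
mod `k`, so `X` is `k Y` plus a multiple of the norm element `Σ_g g`, and the latter is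
annihilated by every `e − g`. Doing the same on the right shows `Sᵀ r T − r ∈ 𝒜 + ℬ`, so
`π' ∘ π` is the identity on torsion, and symmetrically so is `π ∘ π'`.
-/

open Matrix

section GroupRing

variable {Γ : Type} [CommGroup Γ]

noncomputable abbrev augVec {ι : Type*} (u : ι → Γ) : ι → ZG Γ :=
  fun i => 1 - MonoidAlgebra.of ℤ Γ (u i)

theorem one_sub_of_mem_span_of_mem_closure {S : Set Γ} {g : Γ} (hg : g ∈ Subgroup.closure S) :
    1 - MonoidAlgebra.of ℤ Γ g ∈ Ideal.span ((fun x => 1 - MonoidAlgebra.of ℤ Γ x) '' S) := by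
  induction hg using Subgroup.closure_induction with
  | mem x hx => exact Ideal.subset_span ⟨x, hx, rfl⟩
  | one => rw [map_one, sub_self]; exact Ideal.zero_mem _
  | mul x y _ _ hx hy =>
    have : (1 : ZG Γ) - MonoidAlgebra.of ℤ Γ (x * y) =
        (1 - MonoidAlgebra.of ℤ Γ x) + MonoidAlgebra.of ℤ Γ x * (1 - MonoidAlgebra.of ℤ Γ y) := by
      rw [map_mul]; ring
    rw [this]
    exact Ideal.add_mem _ hx (Ideal.mul_mem_left _ _ hy)
  | inv x _ hx =>
    have : (1 : ZG Γ) - MonoidAlgebra.of ℤ Γ x⁻¹ =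
        -MonoidAlgebra.of ℤ Γ x⁻¹ * (1 - MonoidAlgebra.of ℤ Γ x) := by
      rw [neg_mul, mul_sub, mul_one, ← map_mul, inv_mul_cancel, map_one]; ring
    rw [this]
    exact Ideal.mul_mem_left _ _ hx

theorem coeff_mul_one_sub_of (X : ZG Γ) (g x : Γ) :
    (X * (1 - MonoidAlgebra.of ℤ Γ g)).coeff x = X.coeff x - X.coeff (x * g⁻¹) := by
  simp [mul_sub, MonoidAlgebra.of_apply]

variable {m n : Type*} [Fintype m]

theorem exists_augVec_dotProduct_eq {u : m → Γ} (hu : Subgroup.closure (Set.range u) = ⊤)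
    (g : Γ) : ∃ c : m → ZG Γ, augVec u ⬝ᵥ c = 1 - MonoidAlgebra.of ℤ Γ g := by
  have hg := one_sub_of_mem_span_of_mem_closure (hu ▸ Subgroup.mem_top g)
  rw [← Set.range_comp] at hg
  obtain ⟨c, hc⟩ := (Submodule.mem_span_range_iff_exists_fun (ZG Γ)).mp hg
  exact ⟨c, hc ▸ Finset.sum_congr rfl fun i _ => mul_comm _ _⟩

theorem exists_augVec_vecMul_eq {u : m → Γ} (hu : Subgroup.closure (Set.range u) = ⊤)
    (v : n → Γ) : ∃ s : Matrix m n (ZG Γ), augVec u ᵥ* s = augVec v := by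
  choose c hc using fun j => exists_augVec_dotProduct_eq hu (v j)
  exact ⟨(of c)ᵀ, funext hc⟩

end GroupRing

section Purification

variable {Γ : Type} [CommGroup Γ] [Fintype Γ]

noncomputable def normElement (Γ : Type) [CommGroup Γ] [Fintype Γ] : ZG Γ :=
  ∑ g : Γ, MonoidAlgebra.of ℤ Γ g

theorem normElement_mul_one_sub_of (g : Γ) :
    normElement Γ * (1 - MonoidAlgebra.of ℤ Γ g) = 0 := by
  have : normElement Γ * MonoidAlgebra.of ℤ Γ g = normElement Γ := by
    rw [normElement, Finset.sum_mul]
    simp only [← map_mul]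
    exact Fintype.sum_bijective (· * g) (Group.mulRight_bijective g) _ _ fun _ => rfl
  rw [mul_sub, mul_one, this, sub_self]

theorem coeff_normElement (x : Γ) : (normElement Γ).coeff x = 1 := by
  classical
  simp [normElement, MonoidAlgebra.coeff_sum, MonoidAlgebra.of_apply, Finsupp.single_apply]

theorem exists_nsmul_add_smul_normElement_eq {k : ℕ} {X : ZG Γ}
    (hX : ∀ g, ∃ p : ZG Γ, k • p = X * (1 - MonoidAlgebra.of ℤ Γ g)) :
    ∃ Y : ZG Γ, k • Y + X.coeff 1 • normElement Γ = X := by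
  choose p hp using hX
  refine ⟨MonoidAlgebra.ofCoeff (Finsupp.equivFunOnFinite.symm fun x => (p x).coeff x), ?_⟩
  ext x
  -- the coefficient of `X (e − x)` at `x` is `X(x) − X(e)`
  have hx := congrArg (MonoidAlgebra.coeff · x) (hp x)
  simp only [MonoidAlgebra.coeff_smul_apply, coeff_mul_one_sub_of, mul_inv_cancel] at hx
  rw [MonoidAlgebra.coeff_add, Finsupp.add_apply, MonoidAlgebra.coeff_smul_apply,
    MonoidAlgebra.coeff_smul_apply, coeff_normElement, smul_eq_mul, mul_one]
  simp only [Finsupp.equivFunOnFinite_symm_apply_apply]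
  rw [hx, sub_add_cancel]

variable {l m : Type*} [Fintype m]

theorem exists_eq_smul_augVec_of_nsmul_eq {u : m → Γ} (hu : Subgroup.closure (Set.range u) = ⊤)
    {k : ℕ} (hk : k ≠ 0) {q : m → ZG Γ} {X : ZG Γ} (hq : k • q = X • augVec u) :
    ∃ Y : ZG Γ, q = Y • augVec u := by
  have hX : ∀ g, ∃ p : ZG Γ, k • p = X * (1 - MonoidAlgebra.of ℤ Γ g) := by
    intro g
    obtain ⟨c, hc⟩ := exists_augVec_dotProduct_eq hu g
    exact ⟨q ⬝ᵥ c, by rw [← hc, ← smul_eq_mul, ← smul_dotProduct, hq, smul_dotProduct]⟩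
  obtain ⟨Y, hY⟩ := exists_nsmul_add_smul_normElement_eq hX
  have : IsAddTorsionFree (ZG Γ) := Module.isTorsionFree_int_iff_isAddTorsionFree.mp inferInstance
  refine ⟨Y, nsmul_right_injective hk ?_⟩
  funext i
  calc k • q i = X * augVec u i := congrFun hq i
    _ = (k • Y + X.coeff 1 • normElement Γ) * augVec u i := by rw [hY]
    _ = k • (Y * augVec u i) := by
      rw [add_mul, smul_mul_assoc, smul_mul_assoc, normElement_mul_one_sub_of, smul_zero, add_zero]

theorem exists_eq_vecMulVec_of_nsmul_eq {u : m → Γ} (hu : Subgroup.closure (Set.range u) = ⊤)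
    {k : ℕ} (hk : k ≠ 0) {Q : Matrix l m (ZG Γ)} {X : l → ZG Γ}
    (hQ : k • Q = vecMulVec X (augVec u)) : ∃ Y : l → ZG Γ, Q = vecMulVec Y (augVec u) := by
  choose Y hY using fun i => exists_eq_smul_augVec_of_nsmul_eq hu hk (congrFun hQ i)
  exact ⟨Y, funext hY⟩

end Purification

section Transfer

variable {R : Type*} [CommSemiring R] {m n p q m' n' : Type*} [Fintype m] [Fintype n]

def transferHom (s : Matrix m p R) (t : Matrix n q R) : (m → n → R) →+ (p → q → R) where
  toFun r := of.symm (sᵀ * of r * t)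
  map_zero' := by rw [of_zero, Matrix.mul_zero, Matrix.zero_mul, of_symm_zero]
  map_add' r r' := by rw [← of_add_of, Matrix.mul_add, Matrix.add_mul]; rfl

theorem of_transferHom (s : Matrix m p R) (t : Matrix n q R) (r : m → n → R) :
    of (transferHom s t r) = sᵀ * of r * t :=
  rfl

theorem transferHom_apply (s : Matrix m p R) (t : Matrix n q R) (r : m → n → R) :
    transferHom s t r = fun c d => ∑ a, ∑ b, r a b * s a c * t b d := by
  funext c d
  rw [← Matrix.of_apply (transferHom s t r), of_transferHom, Matrix.mul_apply, Finset.sum_comm]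
  simp only [Matrix.mul_apply, transpose_apply, Matrix.of_apply, Finset.sum_mul]
  exact Finset.sum_congr rfl fun a _ => Finset.sum_congr rfl fun b _ => by ring

theorem transferHom_comp [Fintype p] [Fintype q] (s : Matrix m p R) (t : Matrix n q R)
    (s' : Matrix p m' R) (t' : Matrix q n' R) :
    (transferHom s' t').comp (transferHom s t) = transferHom (s * s') (t * t') := by
  ext r : 1
  apply of.injective
  simp only [AddMonoidHom.comp_apply, of_transferHom, transpose_mul, Matrix.mul_assoc]

end Transfer

section Relations

variable {Γ : Type} [CommGroup Γ] {m n p q : Type}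

theorem mem_calA_sup_calB_iff (μ : m ⊕ n → Γ) (r : m → n → ZG Γ) :
    r ∈ calA Γ m n μ ⊔ calB Γ m n μ ↔ ∃ (α : m → ZG Γ) (β : n → ZG Γ),
      of r = vecMulVec α (augVec (μ ∘ Sum.inr)) + vecMulVec (augVec (μ ∘ Sum.inl)) β := by
  rw [AddSubgroup.mem_sup]
  constructor
  · rintro ⟨_, ⟨α, hα⟩, _, ⟨β, hβ⟩, rfl⟩
    refine ⟨α, β, Matrix.ext fun a b => ?_⟩
    simp only [Matrix.of_apply, Pi.add_apply, Matrix.add_apply, vecMulVec_apply, hα, hβ]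
    rw [mul_comm (augVec _ a)]
    rfl
  · rintro ⟨α, β, h⟩
    exact ⟨_, ⟨α, fun _ _ => rfl⟩, _, ⟨β, fun _ _ => mul_comm _ _⟩, of.injective h.symm⟩

variable [Fintype m] [Fintype n]

theorem calA_sup_calB_le_comap_transferHom {μ : m ⊕ n → Γ} {ν : p ⊕ q → Γ}
    {s : Matrix m p (ZG Γ)} {t : Matrix n q (ZG Γ)}
    (hs : augVec (μ ∘ Sum.inl) ᵥ* s = augVec (ν ∘ Sum.inl))
    (ht : augVec (μ ∘ Sum.inr) ᵥ* t = augVec (ν ∘ Sum.inr)) :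
    calA Γ m n μ ⊔ calB Γ m n μ ≤ (calA Γ p q ν ⊔ calB Γ p q ν).comap (transferHom s t) := by
  intro r hr
  obtain ⟨α, β, h⟩ := (mem_calA_sup_calB_iff μ r).mp hr
  refine (mem_calA_sup_calB_iff ν _).mpr ⟨α ᵥ* s, β ᵥ* t, ?_⟩
  rw [of_transferHom, h, Matrix.mul_add, Matrix.add_mul, mul_vecMulVec, mul_vecMulVec,
    vecMulVec_mul, vecMulVec_mul, mulVec_transpose, mulVec_transpose, hs, ht]

theorem transferHom_sub_self_mem_of_nsmul_mem [Fintype Γ] {μ : m ⊕ n → Γ}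
    (hinl : Subgroup.closure (Set.range (μ ∘ Sum.inl)) = ⊤)
    (hinr : Subgroup.closure (Set.range (μ ∘ Sum.inr)) = ⊤)
    {S : Matrix m m (ZG Γ)} {T : Matrix n n (ZG Γ)}
    (hS : augVec (μ ∘ Sum.inl) ᵥ* S = augVec (μ ∘ Sum.inl))
    (hT : augVec (μ ∘ Sum.inr) ᵥ* T = augVec (μ ∘ Sum.inr))
    {k : ℕ} (hk : k ≠ 0) {r : m → n → ZG Γ} (hr : k • r ∈ calA Γ m n μ ⊔ calB Γ m n μ) :
    transferHom S T r - r ∈ calA Γ m n μ ⊔ calB Γ m n μ := by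
  obtain ⟨α, β, h⟩ := (mem_calA_sup_calB_iff μ _).mp hr
  set x := augVec (μ ∘ Sum.inl)
  set y := augVec (μ ∘ Sum.inr)
  rw [← Matrix.smul_of] at h
  have hSr : k • (Sᵀ * of r) = vecMulVec (α ᵥ* S) y + vecMulVec x β := by
    rw [← Matrix.mul_smul, h, Matrix.mul_add, mul_vecMulVec, mul_vecMulVec, mulVec_transpose,
      mulVec_transpose, hS]
  have hleft : k • (Sᵀ * of r - of r) = vecMulVec (α ᵥ* S - α) y := by
    rw [smul_sub, hSr, h, sub_vecMulVec]
    abel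
  have hright : k • (Sᵀ * of r * T - Sᵀ * of r) = vecMulVec x (β ᵥ* T - β) := by
    rw [smul_sub, ← Matrix.smul_mul, hSr, Matrix.add_mul, vecMulVec_mul, vecMulVec_mul, hT,
      vecMulVec_sub]
    abel
  obtain ⟨Y, hY⟩ := exists_eq_vecMulVec_of_nsmul_eq hinr hk hleft
  obtain ⟨Z, hZ⟩ := exists_eq_vecMulVec_of_nsmul_eq hinl hk
    (Q := (Sᵀ * of r * T - Sᵀ * of r)ᵀ) (by rw [← transpose_smul, hright, transpose_vecMulVec])
  refine (mem_calA_sup_calB_iff μ _).mpr ⟨Y, Z, ?_⟩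
  calc of (transferHom S T r - r) = (Sᵀ * of r * T - Sᵀ * of r) + (Sᵀ * of r - of r) := by
        rw [← of_sub_of, of_transferHom, sub_add_sub_cancel]
    _ = vecMulVec Y y + vecMulVec x Z := by
        rw [hY, ← transpose_transpose (Sᵀ * of r * T - Sᵀ * of r), hZ, transpose_vecMulVec,
          add_comm]

end Relations

theorem QuotientAddGroup.map_eq_self_of_mem_torsion {M : Type*} [AddCommGroup M]
    {K : AddSubgroup M} {f : M →+ M} (hf : K ≤ K.comap f)
    (h : ∀ (r : M) (k : ℕ), k ≠ 0 → k • r ∈ K → f r - r ∈ K) {x : M ⧸ K}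
    (hx : x ∈ AddCommGroup.torsion (M ⧸ K)) : QuotientAddGroup.map K K f hf x = x := by
  obtain ⟨r, rfl⟩ := QuotientAddGroup.mk_surjective x
  obtain ⟨k, hk, hkr⟩ := isOfFinAddOrder_iff_nsmul_eq_zero.mp hx
  rw [← QuotientAddGroup.mk_nsmul, QuotientAddGroup.eq_zero_iff] at hkr
  rw [QuotientAddGroup.map_mk, QuotientAddGroup.eq_iff_sub_mem]
  exact h r k hk.ne' hkr

section Quotient

variable {Γ : Type} [CommGroup Γ] {m n p q : Type} [Fintype m] [Fintype n]
  {μ : m ⊕ n → Γ} {ν : p ⊕ q → Γ}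

noncomputable def quotTransferHom {s : Matrix m p (ZG Γ)} {t : Matrix n q (ZG Γ)}
    (hs : augVec (μ ∘ Sum.inl) ᵥ* s = augVec (ν ∘ Sum.inl))
    (ht : augVec (μ ∘ Sum.inr) ᵥ* t = augVec (ν ∘ Sum.inr)) :
    (m → n → ZG Γ) ⧸ (calA Γ m n μ ⊔ calB Γ m n μ) →+
      (p → q → ZG Γ) ⧸ (calA Γ p q ν ⊔ calB Γ p q ν) :=
  QuotientAddGroup.map _ _ (transferHom s t) (calA_sup_calB_le_comap_transferHom hs ht)

theorem quotTransferHom_mk {s : Matrix m p (ZG Γ)} {t : Matrix n q (ZG Γ)}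
    (hs : augVec (μ ∘ Sum.inl) ᵥ* s = augVec (ν ∘ Sum.inl))
    (ht : augVec (μ ∘ Sum.inr) ᵥ* t = augVec (ν ∘ Sum.inr)) (r : m → n → ZG Γ) :
    quotTransferHom hs ht (QuotientAddGroup.mk r) = QuotientAddGroup.mk (transferHom s t r) :=
  rfl

theorem quotTransferHom_quotTransferHom_of_mem_torsion [Fintype Γ] [Fintype p] [Fintype q]
    (hinl : Subgroup.closure (Set.range (μ ∘ Sum.inl)) = ⊤)
    (hinr : Subgroup.closure (Set.range (μ ∘ Sum.inr)) = ⊤)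
    {s : Matrix m p (ZG Γ)} {t : Matrix n q (ZG Γ)} {s' : Matrix p m (ZG Γ)}
    {t' : Matrix q n (ZG Γ)}
    (hs : augVec (μ ∘ Sum.inl) ᵥ* s = augVec (ν ∘ Sum.inl))
    (ht : augVec (μ ∘ Sum.inr) ᵥ* t = augVec (ν ∘ Sum.inr))
    (hs' : augVec (ν ∘ Sum.inl) ᵥ* s' = augVec (μ ∘ Sum.inl))
    (ht' : augVec (ν ∘ Sum.inr) ᵥ* t' = augVec (μ ∘ Sum.inr))
    {x : (m → n → ZG Γ) ⧸ (calA Γ m n μ ⊔ calB Γ m n μ)} (hx : x ∈ AddCommGroup.torsion _) :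
    quotTransferHom hs' ht' (quotTransferHom hs ht x) = x := by
  rw [quotTransferHom, quotTransferHom, QuotientAddGroup.map_map]
  refine QuotientAddGroup.map_eq_self_of_mem_torsion _ (fun r k hk hkr => ?_) hx
  rw [transferHom_comp]
  exact transferHom_sub_self_mem_of_nsmul_mem hinl hinr (by rw [← vecMul_vecMul, hs, hs'])
    (by rw [← vecMul_vecMul, ht, ht']) hk hkr

end Quotient

/-- Lemma 2.2 (torsioniso).  Given a second pair of data (C, D, ν) and elements
s(a,c), t(b,d) ∈ ℤ[G] satisfying Σ_a (e − μ(a))s(a,c) = e − ν(c) and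
Σ_b (e − μ(b))t(b,d) = e − ν(d), the map π(r)(c,d) = Σ_{a,b} r(a,b)s(a,c)t(b,d)
carries 𝒜 + ℬ into 𝒞 + 𝒟, hence induces a homomorphism π̃ : N(A,B) → N(C,D)
with π̃ ∘ ρ_{A,B} = ρ_{C,D} ∘ π, and π̃ restricts to a bijection (isomorphism)
from the torsion subgroup of N(A,B) onto the torsion subgroup of N(C,D). -/
theorem statement2
    (G : Type) [CommGroup G] [Fintype G]
    (A B C D : Type) [Fintype A] [Fintype B] [Fintype C] [Fintype D]
    (μ : A ⊕ B → G) (ν : C ⊕ D → G)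
    (hA : Subgroup.closure (Set.range fun a : A => μ (Sum.inl a)) = ⊤)
    (hB : Subgroup.closure (Set.range fun b : B => μ (Sum.inr b)) = ⊤)
    (hC : Subgroup.closure (Set.range fun c : C => ν (Sum.inl c)) = ⊤)
    (hD : Subgroup.closure (Set.range fun d : D => ν (Sum.inr d)) = ⊤)
    (s : A → C → ZG G) (t : B → D → ZG G)
    (hs : ∀ c, ∑ a : A, (1 - MonoidAlgebra.of ℤ G (μ (Sum.inl a))) * s a c
            = 1 - MonoidAlgebra.of ℤ G (ν (Sum.inl c)))
    (ht : ∀ d, ∑ b : B, (1 - MonoidAlgebra.of ℤ G (μ (Sum.inr b))) * t b d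
            = 1 - MonoidAlgebra.of ℤ G (ν (Sum.inr d))) :
    (∀ r ∈ calA G A B μ ⊔ calB G A B μ,
        (fun c d => ∑ a : A, ∑ b : B, r a b * s a c * t b d) ∈ calA G C D ν ⊔ calB G C D ν)
    ∧
    ∃ πt : ((A → B → ZG G) ⧸ (calA G A B μ ⊔ calB G A B μ)) →+
             ((C → D → ZG G) ⧸ (calA G C D ν ⊔ calB G C D ν)),
      (∀ r : A → B → ZG G,
          πt (QuotientAddGroup.mk r)
            = QuotientAddGroup.mk (fun c d => ∑ a : A, ∑ b : B, r a b * s a c * t b d))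
      ∧
      Set.BijOn πt
        (AddCommGroup.torsion ((A → B → ZG G) ⧸ (calA G A B μ ⊔ calB G A B μ)) : Set _)
        (AddCommGroup.torsion ((C → D → ZG G) ⧸ (calA G C D ν ⊔ calB G C D ν)) : Set _) := by
  have hs : augVec (μ ∘ Sum.inl) ᵥ* of s = augVec (ν ∘ Sum.inl) := funext hs
  have ht : augVec (μ ∘ Sum.inr) ᵥ* of t = augVec (ν ∘ Sum.inr) := funext ht
  obtain ⟨s', hs'⟩ := exists_augVec_vecMul_eq hC (μ ∘ Sum.inl)
  obtain ⟨t', ht'⟩ := exists_augVec_vecMul_eq hD (μ ∘ Sum.inr)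
  refine ⟨fun r hr => ?_, quotTransferHom hs ht, fun r => ?_, ?_⟩
  · simpa only [AddSubgroup.mem_comap, transferHom_apply, Matrix.of_apply]
      using calA_sup_calB_le_comap_transferHom hs ht hr
  · simp only [quotTransferHom_mk, transferHom_apply, Matrix.of_apply]
  · refine Set.InvOn.bijOn (f' := quotTransferHom hs' ht') ⟨fun x hx => ?_, fun y hy => ?_⟩
      (fun x hx => AddCommGroup.le_comap_torsion _ hx)
      (fun y hy => AddCommGroup.le_comap_torsion _ hy)
    · exact quotTransferHom_quotTransferHom_of_mem_torsion hA hB hs ht hs' ht' hx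
    · exact quotTransferHom_quotTransferHom_of_mem_torsion hC hD hs' ht' hs ht hy
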